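/- arXiv:2201.08157 — 2 statements merged into one kernel-verified Lean document; each statement's English description precedes it below -/
import Mathlib

section
/- For every ρ > 0, the function φ : ℝ^d → ℝ defined by φ(x) = exp(−ρ · W2²(x)) is integrable with respect to the Lebesgue measure on ℝ^d. -/
open scoped BigOperators
open MeasureTheory

/-- The patch operator: extract coordinates along an index map. -/
noncomputable def patch {d s : ℕ} (ι : Fin s → Fin d) (x : EuclideanSpace ℝ (Fin d)) :
    EuclideanSpace ℝ (Fin s) :=
  WithLp.toLp 2 (fun l => x (ι l))

/-- The set of couplings between the uniform measures on `Fin N` and `Fin Nt`. -/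
def couplings (N Nt : ℕ) : Set (Matrix (Fin N) (Fin Nt) ℝ) :=
  {π | (∀ j k, 0 ≤ π j k) ∧ (∀ k, ∑ j, π j k = 1 / (Nt : ℝ)) ∧
    (∀ j, ∑ k, π j k = 1 / (N : ℝ))}

/-- Squared Wasserstein-2 distance between the empirical patch distribution of `x`
and that of the reference image `xt`. -/
noncomputable def W2sq {d dt s N Nt : ℕ} (ι : Fin N → Fin s → Fin d)
    (ιt : Fin Nt → Fin s → Fin dt) (xt : EuclideanSpace ℝ (Fin dt))
    (x : EuclideanSpace ℝ (Fin d)) : ℝ :=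
  sInf ((fun π : Matrix (Fin N) (Fin Nt) ℝ =>
    ∑ j, ∑ k, ‖patch (ι j) x - patch (ιt k) xt‖ ^ 2 * π j k) '' couplings N Nt)

/-!
Since the patches cover every coordinate, `∑ⱼ ‖Pⱼ x‖² ≥ ‖x‖²`. Combined with
`‖u - v‖² ≥ ‖u‖² / 2 - ‖v‖²` and the marginal constraints of a coupling, this gives the
coercivity bound `W2²(x) ≥ ‖x‖² / (2N) - (∑ₖ ‖P̃ₖ x̃‖²) / Ñ`, so the density is dominated
by a Gaussian.
Measurability comes for free: `W2²` is the infimum of a jointly continuous cost over the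
compact set of couplings, hence continuous.
-/

open Finset

theorem integrable_exp_neg_mul_norm_sq {V : Type*} [NormedAddCommGroup V]
    [InnerProductSpace ℝ V] [FiniteDimensional ℝ V] [MeasurableSpace V] [BorelSpace V]
    {b : ℝ} (hb : 0 < b) : Integrable (fun v : V => Real.exp (-b * ‖v‖ ^ 2)) := by
  simpa [Complex.norm_exp, ← Complex.ofReal_pow] using
    (GaussianFourier.integrable_cexp_neg_mul_sq_norm_add (V := V) (b := b)
      (by simpa using hb) 0 0).norm

theorem norm_sq_div_two_sub_norm_sq_le {E : Type*} [SeminormedAddCommGroup E] (u v : E) :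
    ‖u‖ ^ 2 / 2 - ‖v‖ ^ 2 ≤ ‖u - v‖ ^ 2 := by
  have h : ‖u‖ ≤ ‖u - v‖ + ‖v‖ := norm_le_norm_sub_add u v
  nlinarith [pow_le_pow_left₀ (norm_nonneg u) h 2, add_sq_le (a := ‖u - v‖) (b := ‖v‖)]

section couplings

variable {N Nt : ℕ} {π : Matrix (Fin N) (Fin Nt) ℝ}

theorem couplings_nonempty (hN : 0 < N) (hNt : 0 < Nt) : (couplings N Nt).Nonempty := by
  refine ⟨fun _ _ => 1 / (N * Nt : ℝ), fun _ _ => by positivity, fun _ => ?_, fun _ => ?_⟩ <;>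
  · simp only [sum_const, card_univ, Fintype.card_fin, nsmul_eq_mul]
    field_simp

theorem entry_le_of_mem_couplings (hπ : π ∈ couplings N Nt) (j : Fin N) (k : Fin Nt) :
    π j k ≤ 1 / N :=
  hπ.2.2 j ▸ single_le_sum (fun k' _ => hπ.1 j k') (mem_univ k)

theorem isCompact_couplings : IsCompact (couplings N Nt) := by
  have hbox : IsCompact (Set.univ.pi fun _ : Fin N => Set.univ.pi fun _ : Fin Nt =>
      Set.Icc (0 : ℝ) (1 / N)) :=
    isCompact_univ_pi fun _ => isCompact_univ_pi fun _ => isCompact_Icc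
  refine hbox.of_isClosed_subset ?_ fun π hπ j _ k _ =>
    ⟨hπ.1 j k, entry_le_of_mem_couplings hπ j k⟩
  simp only [couplings, Set.ofPred_and, Set.ofPred_forall]
  refine .inter (isClosed_iInter fun j => isClosed_iInter fun k => isClosed_le ?_ ?_)
    (.inter (isClosed_iInter fun k => isClosed_eq ?_ ?_)
      (isClosed_iInter fun j => isClosed_eq ?_ ?_)) <;>
  fun_prop

theorem sum_sum_mul_left_of_mem_couplings (hπ : π ∈ couplings N Nt) (f : Fin N → ℝ) :
    ∑ j, ∑ k, f j * π j k = (∑ j, f j) / N := by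
  simp_rw [← mul_sum, hπ.2.2, sum_div, mul_one_div]

theorem sum_sum_mul_right_of_mem_couplings (hπ : π ∈ couplings N Nt) (g : Fin Nt → ℝ) :
    ∑ j, ∑ k, g k * π j k = (∑ k, g k) / Nt := by
  rw [sum_comm]
  simp_rw [← mul_sum, hπ.2.1, sum_div, mul_one_div]

theorem le_sum_sum_norm_sub_sq_mul_of_mem_couplings {E : Type*} [SeminormedAddCommGroup E]
    (hπ : π ∈ couplings N Nt) (a : Fin N → E) (b : Fin Nt → E) :
    (∑ j, ‖a j‖ ^ 2) / (2 * N) - (∑ k, ‖b k‖ ^ 2) / Nt ≤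
      ∑ j, ∑ k, ‖a j - b k‖ ^ 2 * π j k :=
  calc (∑ j, ‖a j‖ ^ 2) / (2 * N) - (∑ k, ‖b k‖ ^ 2) / Nt
      = ∑ j, ∑ k, (‖a j‖ ^ 2 / 2 - ‖b k‖ ^ 2) * π j k := by
        simp_rw [sub_mul, sum_sub_distrib, sum_sum_mul_left_of_mem_couplings hπ,
          sum_sum_mul_right_of_mem_couplings hπ, ← sum_div, div_div]
    _ ≤ ∑ j, ∑ k, ‖a j - b k‖ ^ 2 * π j k := by
        gcongr with j _ k _
        · exact hπ.1 j k
        · exact norm_sq_div_two_sub_norm_sq_le _ _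

end couplings

theorem norm_sq_le_sum_norm_sq_patch {d s N : ℕ} {ι : Fin N → Fin s → Fin d}
    (hcover : ∀ i, ∃ j l, ι j l = i) (x : EuclideanSpace ℝ (Fin d)) :
    ‖x‖ ^ 2 ≤ ∑ j, ‖patch (ι j) x‖ ^ 2 := by
  set g : Fin N × Fin s → Fin d := fun p => ι p.1 p.2
  calc ‖x‖ ^ 2 = ∑ i, x i ^ 2 := EuclideanSpace.real_norm_sq_eq x
    _ ≤ ∑ i, ∑ p with g p = i, x (g p) ^ 2 := by
        gcongr with i
        obtain ⟨j, l, hjl⟩ := hcover i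
        calc x i ^ 2 = x (g (j, l)) ^ 2 := by rw [← hjl]
          _ ≤ ∑ p with g p = i, x (g p) ^ 2 :=
            single_le_sum (f := fun p => x (g p) ^ 2) (fun _ _ => sq_nonneg _)
              (mem_filter.2 ⟨mem_univ (j, l), hjl⟩)
    _ = ∑ p, x (g p) ^ 2 := sum_fiberwise _ _ _
    _ = ∑ j, ‖patch (ι j) x‖ ^ 2 := by
        simp [Fintype.sum_prod_type, g, patch, EuclideanSpace.real_norm_sq_eq]

section W2sq

variable {d dt s N Nt : ℕ} {ι : Fin N → Fin s → Fin d} {ιt : Fin Nt → Fin s → Fin dt}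
  {xt : EuclideanSpace ℝ (Fin dt)}

@[fun_prop]
theorem continuous_patch (f : Fin s → Fin d) :
    Continuous (patch f : EuclideanSpace ℝ (Fin d) → EuclideanSpace ℝ (Fin s)) := by
  unfold patch
  fun_prop

@[fun_prop]
theorem continuous_W2sq : Continuous (W2sq ι ιt xt) :=
  isCompact_couplings.continuous_sInf (by fun_prop)

theorem norm_sq_div_sub_le_W2sq (hN : 0 < N) (hNt : 0 < Nt)
    (hcover : ∀ i, ∃ j l, ι j l = i) (x : EuclideanSpace ℝ (Fin d)) :
    ‖x‖ ^ 2 / (2 * N) - (∑ k, ‖patch (ιt k) xt‖ ^ 2) / Nt ≤ W2sq ι ιt xt x := by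
  refine le_csInf ((couplings_nonempty hN hNt).image _) ?_
  rintro _ ⟨π, hπ, rfl⟩
  refine le_trans ?_ (le_sum_sum_norm_sub_sq_mul_of_mem_couplings hπ _ _)
  gcongr
  exact norm_sq_le_sum_norm_sq_patch hcover x

end W2sq

theorem wpp_density_integrable_general (d dt s N Nt : ℕ)
    (hN : 0 < N) (hNt : 0 < Nt)
    (ι : Fin N → Fin s → Fin d)
    (ιt : Fin Nt → Fin s → Fin dt)
    (xt : EuclideanSpace ℝ (Fin dt))
    (hcover : ∀ i : Fin d, ∃ j l, ι j l = i)
    (ρ : ℝ) (hρ : 0 < ρ) :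
    Integrable (fun x : EuclideanSpace ℝ (Fin d) =>
      Real.exp (-ρ * W2sq ι ιt xt x)) := by
  set C := (∑ k, ‖patch (ιt k) xt‖ ^ 2) / Nt
  have hgauss := (integrable_exp_neg_mul_norm_sq (V := EuclideanSpace ℝ (Fin d))
    (b := ρ / (2 * N)) (by positivity)).const_mul (Real.exp (ρ * C))
  refine hgauss.mono' (by fun_prop : Continuous _).aestronglyMeasurable (.of_forall fun x => ?_)
  rw [Real.norm_of_nonneg (Real.exp_pos _).le, ← Real.exp_add, Real.exp_le_exp]
  have hlower := mul_le_mul_of_nonneg_left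
    (norm_sq_div_sub_le_W2sq (ιt := ιt) (xt := xt) hN hNt hcover x) hρ.le
  have hexpand : ρ * (‖x‖ ^ 2 / (2 * N) - C) = ρ / (2 * N) * ‖x‖ ^ 2 - ρ * C := by ring
  linarith

/-- For every `ρ > 0`, the function `x ↦ exp (-ρ * W2²(x))` is integrable
with respect to the Lebesgue measure on `ℝ^d`, provided the patches cover every coordinate. -/
theorem wpp_density_integrable (d dt s N Nt : ℕ)
    (hd : 0 < d) (hdt : 0 < dt) (hs : 0 < s) (hN : 0 < N) (hNt : 0 < Nt)
    (ι : Fin N → Fin s → Fin d) (hι : ∀ j, Function.Injective (ι j))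
    (ιt : Fin Nt → Fin s → Fin dt) (hιt : ∀ k, Function.Injective (ιt k))
    (xt : EuclideanSpace ℝ (Fin dt))
    (hcover : ∀ i : Fin d, ∃ j l, ι j l = i)
    (ρ : ℝ) (hρ : 0 < ρ) :
    Integrable (fun x : EuclideanSpace ℝ (Fin d) =>
      Real.exp (-ρ * W2sq ι ιt xt x)) :=
  wpp_density_integrable_general d dt s N Nt hN hNt ι ιt xt hcover ρ hρ
end

section
/- Suppose g is Fréchet differentiable at θ₀ with derivative Dg, and θ ↦ F(ψ*, θ) is Fréchet differentiable at θ₀ with derivative D. Then Dg = D. (Envelope theorem: at a maximizer ψ* of F(·, θ₀), the derivative of the value function g coincides with the partial derivative of F in θ.) -/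
/-- Envelope theorem: if `g` is a value function for `F`
(i.e. `g θ ≥ F ψ θ` for all `ψ, θ`), `ψ*` is a maximizer at `θ₀`
(i.e. `g θ₀ = F ψ* θ₀`), `g` is Fréchet differentiable at `θ₀` with derivative `Dg`,
and `θ ↦ F ψ* θ` is Fréchet differentiable at `θ₀` with derivative `D`,
then `Dg = D`. -/
theorem envelope_theorem {A : Type*} [Nonempty A] (p : ℕ)
    (F : A → EuclideanSpace ℝ (Fin p) → ℝ)
    (g : EuclideanSpace ℝ (Fin p) → ℝ)
    (hval : ∀ ψ θ, F ψ θ ≤ g θ)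
    (θ₀ : EuclideanSpace ℝ (Fin p)) (ψstar : A)
    (hmax : g θ₀ = F ψstar θ₀)
    (Dg D : EuclideanSpace ℝ (Fin p) →L[ℝ] ℝ)
    (hg : HasFDerivAt g Dg θ₀)
    (hF : HasFDerivAt (fun θ => F ψstar θ) D θ₀) :
    Dg = D := by
  have hmin : IsLocalMin (fun θ => g θ - F ψstar θ) θ₀ := by
    apply IsMinOn.isLocalMin _ Filter.univ_mem
    intro θ _
    simp only [hmax, sub_self]
    exact sub_nonneg.mpr (hval ψstar θ)
  have := hmin.hasFDerivAt_eq_zero (hg.sub hF)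
  exact sub_eq_zero.mp this
end
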